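/- Let A, B be real symmetric positive definite n×n matrices. Then det(B) − det(A) = tr(𝐀 · (B − A)), where 𝐀 := ∫₀¹ det((1−t)B + tA) · ((1−t)B + tA)⁻¹ dt. Moreover 𝐀 is symmetric positive definite. -/

import Mathlib

/-!
Along the segment `M t = (1 - t) • B + t • A`, Jacobi's formula
`d/dt det (M t) = tr (adj (M t) * (A - B))` integrates to `det B - det A = tr (𝒜 * (B - A))`,
because `adj (M t) = det (M t) • (M t)⁻¹` for the invertible matrices `M t`. Each `M t` is
positive definite, hence so is `adj (M t)`, and the quadratic form of `𝒜` is the integral of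
those of the `adj (M t)`, so `𝒜` is positive definite.
-/

open Matrix

namespace Matrix

section Square

variable {n : Type*} [Fintype n] [DecidableEq n]

lemma adjugate_eq_det_smul_inv {α : Type*} [CommRing α] (A : Matrix n n α) (h : IsUnit A.det) :
    A.adjugate = A.det • A⁻¹ := by
  rw [inv_def, smul_smul, Ring.mul_inverse_cancel _ h, one_smul]

open scoped ComplexOrder in
lemma PosDef.adjugate {𝕜 : Type*} [RCLike 𝕜] {A : Matrix n n 𝕜} (hA : A.PosDef) :
    A.adjugate.PosDef := by
  rw [adjugate_eq_det_smul_inv _ hA.det_pos.ne'.isUnit]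
  exact hA.inv.smul hA.det_pos

section Jacobi

variable {𝕜 : Type*} [NontriviallyNormedField 𝕜]

open Polynomial in
lemma hasDerivAt_det_one_add_smul (M : Matrix n n 𝕜) :
    HasDerivAt (fun r : 𝕜 => (1 + r • M).det) M.trace 0 := by
  set q := (1 + (X : 𝕜[X]) • M.map C).det.divX.divX
  have expand : (fun r : 𝕜 => (1 + r • M).det) = fun r => 1 + M.trace * r + q.eval r * r ^ 2 :=
    funext fun r => det_one_add_smul r M
  have h := ((hasDerivAt_id (0 : 𝕜)).const_mul M.trace).const_add 1 |>.fun_add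
    ((q.hasDerivAt 0).fun_mul (hasDerivAt_pow 2 (0 : 𝕜)))
  rw [expand]
  simpa using h

lemma hasDerivAt_det_add_smul (S C : Matrix n n 𝕜) {t : 𝕜} (h : IsUnit (S + t • C).det) :
    HasDerivAt (fun s : 𝕜 => (S + s • C).det) ((S + t • C).adjugate * C).trace t := by
  have factor : ∀ s : 𝕜, S + s • C = (S + t • C) * (1 + (s - t) • ((S + t • C)⁻¹ * C)) :=
    fun s => by
      rw [mul_add, mul_one, mul_smul_comm, mul_nonsing_inv_cancel_left _ _ h, sub_smul]
      abel
  have at_zero : HasDerivAt (fun r : 𝕜 => (1 + r • ((S + t • C)⁻¹ * C)).det)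
      ((S + t • C)⁻¹ * C).trace (t - t) := by
    rw [sub_self]
    exact hasDerivAt_det_one_add_smul _
  rw [show (fun s : 𝕜 => (S + s • C).det) = _ from funext fun s => by rw [factor s, det_mul],
    adjugate_eq_det_smul_inv _ h, smul_mul, trace_smul, smul_eq_mul]
  exact (at_zero.comp_sub_const t t).const_mul (S + t • C).det

end Jacobi

lemma det_sub_det_eq_integral_trace_adjugate_mul (P Q : Matrix n n ℝ)
    (h : ∀ t ∈ Set.Icc (0 : ℝ) 1, IsUnit ((1 - t) • P + t • Q).det) :
    P.det - Q.det = ∫ t in (0 : ℝ)..1, (((1 - t) • P + t • Q).adjugate * (P - Q)).trace := by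
  have line : ∀ t : ℝ, (1 - t) • P + t • Q = P + t • (Q - P) := fun t => by module
  have deriv : ∀ t ∈ Set.uIcc (0 : ℝ) 1, HasDerivAt (fun s => -(P + s • (Q - P)).det)
      (((1 - t) • P + t • Q).adjugate * (P - Q)).trace t := by
    intro t ht
    rw [Set.uIcc_of_le zero_le_one] at ht
    rw [line, ← neg_sub Q P, mul_neg, trace_neg]
    exact (hasDerivAt_det_add_smul P (Q - P) (line t ▸ h t ht)).neg
  rw [intervalIntegral.integral_eq_sub_of_hasDerivAt deriv
    (Continuous.intervalIntegrable (by fun_prop) 0 1)]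
  simp [neg_add_eq_sub]

end Square

open scoped ComplexOrder in
lemma PosDef.one_sub_smul_add_smul {n 𝕜 : Type*} [Fintype n] [RCLike 𝕜] {A B : Matrix n n 𝕜}
    (hA : A.PosDef) (hB : B.PosDef) {t : ℝ} (ht : t ∈ Set.Icc (0 : ℝ) 1) :
    ((1 - t) • A + t • B).PosDef := by
  rcases ht.2.lt_or_eq with ht1 | rfl
  · exact (hA.smul (sub_pos.2 ht1)).add_posSemidef (hB.posSemidef.smul ht.1)
  · simpa using hB

section IntervalIntegral

open intervalIntegral

variable {m p : Type*} [Fintype m] [Fintype p] {F : ℝ → Matrix m p ℝ} {a b : ℝ}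

lemma sum_sum_intervalIntegral_mul (hF : Continuous F) (c : m → p → ℝ) :
    ∑ i, ∑ j, (∫ t in a..b, F t i j) * c i j = ∫ t in a..b, ∑ i, ∑ j, F t i j * c i j := by
  have hcont : ∀ i j, Continuous fun t => F t i j * c i j :=
    fun i j => (hF.matrix_elem i j).mul continuous_const
  simp_rw [← integral_mul_const]
  rw [integral_finsetSum fun i _ =>
    (continuous_finsetSum _ fun j _ => hcont i j).intervalIntegrable a b]
  exact Finset.sum_congr rfl fun i _ =>
    (integral_finsetSum fun j _ => (hcont i j).intervalIntegrable a b).symm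

lemma trace_of_intervalIntegral_mul (hF : Continuous F) (E : Matrix p m ℝ) :
    ((of fun i j => ∫ t in a..b, F t i j) * E).trace = ∫ t in a..b, (F t * E).trace := by
  simpa [trace, mul_apply] using sum_sum_intervalIntegral_mul hF fun i j => E j i

lemma dotProduct_of_intervalIntegral_mulVec (hF : Continuous F) (x : m → ℝ) (y : p → ℝ) :
    x ⬝ᵥ (of fun i j => ∫ t in a..b, F t i j) *ᵥ y = ∫ t in a..b, x ⬝ᵥ F t *ᵥ y := by
  have h := sum_sum_intervalIntegral_mul (a := a) (b := b) hF fun i j => x i * y j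
  simp only [dotProduct, mulVec, of_apply, Finset.mul_sum, mul_left_comm (x _)]
  exact h

lemma posDef_of_intervalIntegral {F : ℝ → Matrix m m ℝ} (hF : Continuous F) (hab : a < b)
    (hpos : ∀ t ∈ Set.Icc a b, (F t).PosDef) :
    (of fun i j => ∫ t in a..b, F t i j).PosDef := by
  refine posDef_iff_dotProduct_mulVec.2 ⟨?_, fun x hx => ?_⟩
  · ext i j
    simp only [conjTranspose_apply, of_apply, star_trivial]
    refine integral_congr fun t ht => ?_
    rw [Set.uIcc_of_le hab.le] at ht
    simpa using (hpos t ht).isHermitian.apply i j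
  · rw [star_trivial, dotProduct_of_intervalIntegral_mulVec hF]
    refine intervalIntegral_pos_of_pos_on ?_ (fun t ht => ?_) hab
    · exact (continuous_const.dotProduct (hF.matrix_mulVec continuous_const)).intervalIntegrable a b
    · simpa using (hpos t (Set.Ioo_subset_Icc_self ht)).dotProduct_mulVec_pos hx

end IntervalIntegral

end Matrix

theorem stmt5 {n : ℕ} (A B : Matrix (Fin n) (Fin n) ℝ)
    (hA : A.PosDef) (hB : B.PosDef) :
    let M : ℝ → Matrix (Fin n) (Fin n) ℝ := fun t => (1 - t) • B + t • A
    let 𝒜 : Matrix (Fin n) (Fin n) ℝ :=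
      Matrix.of fun i j => ∫ t in (0 : ℝ)..1, (M t).det * (M t)⁻¹ i j
    B.det - A.det = (𝒜 * (B - A)).trace ∧ 𝒜.IsSymm ∧ 𝒜.PosDef := by
  intro M 𝒜
  have hM : ∀ t ∈ Set.Icc (0 : ℝ) 1, (M t).PosDef := fun t ht => hB.one_sub_smul_add_smul hA ht
  -- Unlike `(M t)⁻¹`, the adjugate is continuous in `t` everywhere.
  have h𝒜 : 𝒜 = of fun i j => ∫ t in (0 : ℝ)..1, (M t).adjugate i j := by
    ext i j
    refine intervalIntegral.integral_congr fun t ht => ?_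
    rw [Set.uIcc_of_le zero_le_one] at ht
    simp [adjugate_eq_det_smul_inv _ (hM t ht).det_pos.ne'.isUnit]
  have hadj : Continuous fun t => (M t).adjugate := by fun_prop
  have h𝒜pos : 𝒜.PosDef :=
    h𝒜 ▸ posDef_of_intervalIntegral hadj one_pos fun t ht => (hM t ht).adjugate
  refine ⟨?_, isHermitian_iff_isSymm.1 h𝒜pos.isHermitian, h𝒜pos⟩
  rw [h𝒜, trace_of_intervalIntegral_mul hadj]
  exact det_sub_det_eq_integral_trace_adjugate_mul B A fun t ht => (hM t ht).det_pos.ne'.isUnit
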